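/- arXiv:1103.2487 — 2 statements merged into one kernel-verified Lean document; each statement's English description precedes it below -/
import Mathlib

section
/- Let H be the conjunctive hierarchical game on P = P_1∪...∪P_m (disjoint nonempty levels, |P_i| = n_i) with thresholds k_1<...<k_{m-1}≤k_m. Then the equivalence classes of ~_H are exactly P_1,...,P_m if and only if (a) k_1 ≤ n_1 and (b) k_i < k_{i-1} + n_i for every i with 1 < i ≤ m. Moreover, under (a) and (b), every player of the last level P_m is a dummy if and only if k_{m-1} = k_m. -/
/-!
Players of one level lie in the same cumulative unions, so they are interchangeable. If (a)
fails, no coalition wins; if (b) fails at level `i`, threshold `i - 1` is implied by threshold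
`i`, which makes a player of `P (i - 1)` interchangeable with one of `P i`. Under (a) and (b)
there are tight coalitions, meeting every threshold exactly with `k t - k (t - 1)` players of
level `t`, that contain a prescribed player `u` of level `i` and avoid a prescribed player `v`
of a higher level: swapping `u` for `v` breaks threshold `i`. Tight coalitions are minimal
winning, and one contains a given player of `P m` iff `k (m - 1) < k m`; if `k (m - 1) = k m`,
threshold `m` follows from threshold `m - 1`, so no player of `P m` is ever needed.
-/

/-- Cumulative union `P_1 ∪ ... ∪ P_i` of the first `i` (1-indexed) levels. -/
def cumUnion {α : Type*} [DecidableEq α] (P : ℕ → Finset α) (i : ℕ) : Finset α :=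
  (Finset.Icc 1 i).biUnion P

/-- Winning predicate of the conjunctive hierarchical game. -/
def conjWin {α : Type*} [DecidableEq α] (m : ℕ) (P : ℕ → Finset α) (k : ℕ → ℕ)
    (X : Finset α) : Prop :=
  ∀ i, 1 ≤ i → i ≤ m → k i ≤ (X ∩ cumUnion P i).card

/-- A minimal winning coalition of the conjunctive hierarchical game. -/
def minWinning {α : Type*} [DecidableEq α] (m : ℕ) (P : ℕ → Finset α) (k : ℕ → ℕ)
    (X : Finset α) : Prop :=
  conjWin m P k X ∧ ∀ Y : Finset α, Y ⊂ X → ¬ conjWin m P k Y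

/-- A dummy player: one that belongs to no minimal winning coalition. -/
def isDummy {α : Type*} [DecidableEq α] (m : ℕ) (P : ℕ → Finset α) (k : ℕ → ℕ)
    (p : α) : Prop :=
  ∀ X : Finset α, minWinning m P k X → p ∉ X

open Finset

lemma eq_of_mem_of_mem {α : Type*} {m : ℕ} {P : ℕ → Finset α}
    (hdisj : ∀ i j, 1 ≤ i → i < j → j ≤ m → Disjoint (P i) (P j))
    {a : α} {i j : ℕ} (hi : 1 ≤ i) (him : i ≤ m) (hj : 1 ≤ j) (hjm : j ≤ m)
    (hai : a ∈ P i) (haj : a ∈ P j) : i = j := by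
  rcases lt_trichotomy i j with h | h | h
  · exact absurd haj (disjoint_left.mp (hdisj i j hi h hjm) hai)
  · exact h
  · exact absurd hai (disjoint_left.mp (hdisj j i hj h him) haj)

lemma not_exists_mem_and_mem {α : Type*} {m : ℕ} {P : ℕ → Finset α}
    (hdisj : ∀ i j, 1 ≤ i → i < j → j ≤ m → Disjoint (P i) (P j))
    {u v : α} {i j : ℕ} (hi : 1 ≤ i) (him : i ≤ m) (hj : 1 ≤ j) (hjm : j ≤ m)
    (hij : i ≠ j) (hu : u ∈ P i) (hv : v ∈ P j) :
    ¬ ∃ l, 1 ≤ l ∧ l ≤ m ∧ u ∈ P l ∧ v ∈ P l := by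
  rintro ⟨l, hl1, hlm, hul, hvl⟩
  exact hij ((eq_of_mem_of_mem hdisj hi him hl1 hlm hu hul).trans
    (eq_of_mem_of_mem hdisj hl1 hlm hj hjm hvl hv))

section Levels

variable {α : Type*} [DecidableEq α] {m : ℕ} {P : ℕ → Finset α}

lemma mem_cumUnion {j : ℕ} {a : α} : a ∈ cumUnion P j ↔ ∃ s, 1 ≤ s ∧ s ≤ j ∧ a ∈ P s := by
  simp [cumUnion, and_assoc]

lemma cumUnion_one : cumUnion P 1 = P 1 := by
  simp [cumUnion]

lemma cumUnion_mono {i j : ℕ} (h : i ≤ j) : cumUnion P i ⊆ cumUnion P j :=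
  biUnion_subset_biUnion_of_subset_left _ (Icc_subset_Icc_right h)

lemma cumUnion_add_one (j : ℕ) : cumUnion P (j + 1) = cumUnion P j ∪ P (j + 1) := by
  ext a
  simp only [mem_cumUnion, mem_union]
  constructor
  · rintro ⟨s, hs1, hsj, ha⟩
    rcases Nat.lt_or_eq_of_le hsj with h | rfl
    · exact Or.inl ⟨s, hs1, by omega, ha⟩
    · exact Or.inr ha
  · rintro (⟨s, hs1, hsj, ha⟩ | ha)
    · exact ⟨s, hs1, by omega, ha⟩
    · exact ⟨j + 1, by omega, le_rfl, ha⟩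

lemma mem_cumUnion_iff_le (hdisj : ∀ i j, 1 ≤ i → i < j → j ≤ m → Disjoint (P i) (P j))
    {a : α} {i j : ℕ} (hi : 1 ≤ i) (him : i ≤ m) (hjm : j ≤ m) (ha : a ∈ P i) :
    a ∈ cumUnion P j ↔ i ≤ j := by
  rw [mem_cumUnion]
  constructor
  · rintro ⟨s, hs1, hsj, has⟩
    have := eq_of_mem_of_mem hdisj hi him hs1 (hsj.trans hjm) ha has
    omega
  · exact fun h => ⟨i, hi, h, ha⟩

lemma card_inter_cumUnion_add_one
    (hdisj : ∀ i j, 1 ≤ i → i < j → j ≤ m → Disjoint (P i) (P j))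
    {j : ℕ} (hj : j + 1 ≤ m) (Y : Finset α) :
    #(Y ∩ cumUnion P (j + 1)) = #(Y ∩ cumUnion P j) + #(Y ∩ P (j + 1)) := by
  have hC : Disjoint (cumUnion P j) (P (j + 1)) :=
    (disjoint_biUnion_left _ _ _).mpr fun s hs => by
      rw [mem_Icc] at hs
      exact hdisj s (j + 1) hs.1 (by omega) hj
  rw [cumUnion_add_one, inter_union_distrib_left,
    card_union_of_disjoint (hC.mono inter_subset_right inter_subset_right)]

end Levels

lemma Finset.card_insert_inter_eq_of_mem_iff {α : Type*} [DecidableEq α] {s C : Finset α}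
    {u v : α} (hu : u ∉ s) (hv : v ∉ s) (h : u ∈ C ↔ v ∈ C) :
    #(insert u s ∩ C) = #(insert v s ∩ C) := by
  by_cases huC : u ∈ C
  · rw [insert_inter_of_mem huC, insert_inter_of_mem (h.mp huC),
      card_insert_of_notMem (by simp [hu]), card_insert_of_notMem (by simp [hv])]
  · rw [insert_inter_of_notMem huC, insert_inter_of_notMem (mt h.mpr huC)]

/-- The relation `~_H`. -/
def conjEquiv {α : Type*} [DecidableEq α] (m : ℕ) (P : ℕ → Finset α) (k : ℕ → ℕ)
    (u v : α) : Prop :=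
  ∀ X : Finset α, u ∉ X → v ∉ X → (conjWin m P k (insert u X) ↔ conjWin m P k (insert v X))

section Game

variable {α : Type*} [DecidableEq α] {m : ℕ} {P : ℕ → Finset α} {k : ℕ → ℕ}

lemma conjEquiv_of_mem_cumUnion_iff {u v : α}
    (h : ∀ j, 1 ≤ j → j ≤ m → (u ∈ cumUnion P j ↔ v ∈ cumUnion P j)) :
    conjEquiv m P k u v := fun X hu hv =>
  forall₃_congr fun j hj hjm => by
    rw [card_insert_inter_eq_of_mem_iff hu hv (h j hj hjm)]

lemma conjEquiv_of_mem_of_mem (hdisj : ∀ i j, 1 ≤ i → i < j → j ≤ m → Disjoint (P i) (P j))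
    {u v : α} {i : ℕ} (hi : 1 ≤ i) (him : i ≤ m) (hu : u ∈ P i) (hv : v ∈ P i) :
    conjEquiv m P k u v :=
  conjEquiv_of_mem_cumUnion_iff fun _ _ hjm => by
    rw [mem_cumUnion_iff_le hdisj hi him hjm hu, mem_cumUnion_iff_le hdisj hi him hjm hv]

lemma le_card_inter_cumUnion_of_add_le {i : ℕ} (hred : k i + #(P (i + 1)) ≤ k (i + 1))
    {Y : Finset α} (hY : k (i + 1) ≤ #(Y ∩ cumUnion P (i + 1))) :
    k i ≤ #(Y ∩ cumUnion P i) := by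
  have : #(Y ∩ cumUnion P (i + 1)) ≤ #(Y ∩ cumUnion P i) + #(P (i + 1)) :=
    calc #(Y ∩ cumUnion P (i + 1))
        = #((Y ∩ cumUnion P i) ∪ (Y ∩ P (i + 1))) := by
          rw [cumUnion_add_one, inter_union_distrib_left]
      _ ≤ #(Y ∩ cumUnion P i) + #(Y ∩ P (i + 1)) := card_union_le _ _
      _ ≤ #(Y ∩ cumUnion P i) + #(P (i + 1)) := by gcongr; exact inter_subset_right
  omega

lemma conjWin_iff_of_add_le {i : ℕ} (hi : 1 ≤ i) (him : i + 1 ≤ m)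
    (hred : k i + #(P (i + 1)) ≤ k (i + 1)) {Y : Finset α} :
    conjWin m P k Y ↔ ∀ j, 1 ≤ j → j ≤ m → j ≠ i → k j ≤ #(Y ∩ cumUnion P j) := by
  refine ⟨fun h j hj hjm _ => h j hj hjm, fun h j hj hjm => ?_⟩
  obtain rfl | hji := eq_or_ne j i
  · exact le_card_inter_cumUnion_of_add_le hred (h (j + 1) (by omega) him (by omega))
  · exact h j hj hjm hji

lemma conjEquiv_of_add_le (hdisj : ∀ i j, 1 ≤ i → i < j → j ≤ m → Disjoint (P i) (P j))
    {i : ℕ} (hi : 1 ≤ i) (him : i + 1 ≤ m) (hred : k i + #(P (i + 1)) ≤ k (i + 1))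
    {u v : α} (hu : u ∈ P i) (hv : v ∈ P (i + 1)) : conjEquiv m P k u v := by
  intro X huX hvX
  have hcard : ∀ j, j ≤ m → j ≠ i →
      #(insert u X ∩ cumUnion P j) = #(insert v X ∩ cumUnion P j) :=
    fun j hjm hji => card_insert_inter_eq_of_mem_iff huX hvX <| by
      rw [mem_cumUnion_iff_le hdisj hi (by omega) hjm hu,
        mem_cumUnion_iff_le hdisj (by omega) him hjm hv]
      omega
  rw [conjWin_iff_of_add_le hi him hred, conjWin_iff_of_add_le hi him hred]
  exact forall₄_congr fun j _ hjm hji => by rw [hcard j hjm hji]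

lemma not_conjWin_of_card_lt (hm : 1 ≤ m) (h : #(P 1) < k 1) (Y : Finset α) :
    ¬ conjWin m P k Y := fun hY => by
  have := hY 1 le_rfl hm
  have := card_le_card (inter_subset_right (s₁ := Y) (s₂ := cumUnion P 1))
  rw [cumUnion_one] at *
  omega

lemma biUnion_Icc_inter_eq (hdisj : ∀ i j, 1 ≤ i → i < j → j ≤ m → Disjoint (P i) (P j))
    {T : ℕ → Finset α} (hT : ∀ t, 1 ≤ t → t ≤ m → T t ⊆ P t) {t : ℕ} (ht : 1 ≤ t)
    (htm : t ≤ m) : (Icc 1 m).biUnion T ∩ P t = T t := by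
  ext a
  simp only [mem_inter, mem_biUnion, mem_Icc]
  constructor
  · rintro ⟨⟨s, ⟨hs, hsm⟩, has⟩, hat⟩
    obtain rfl := eq_of_mem_of_mem hdisj hs hsm ht htm (hT s hs hsm has) hat
    exact has
  · exact fun ha => ⟨⟨t, ⟨ht, htm⟩, ha⟩, hT t ht htm ha⟩

lemma exists_tight_coalition
    (hdisj : ∀ i j, 1 ≤ i → i < j → j ≤ m → Disjoint (P i) (P j))
    (R Q : ℕ → Finset α) (hRQ : ∀ t, 1 ≤ t → t ≤ m → R t ⊆ Q t ∧ Q t ⊆ P t)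
    (h1 : #(R 1) ≤ k 1 ∧ k 1 ≤ #(Q 1))
    (hstep : ∀ t, 1 < t → t ≤ m → k (t - 1) + #(R t) ≤ k t ∧ k t ≤ k (t - 1) + #(Q t)) :
    ∃ S ⊆ cumUnion P m, (∀ t, 1 ≤ t → t ≤ m → R t ⊆ S ∧ S ∩ P t ⊆ Q t) ∧
      ∀ j, 1 ≤ j → j ≤ m → #(S ∩ cumUnion P j) = k j := by
  have hex : ∀ t, 1 ≤ t → t ≤ m → ∃ T : Finset α, R t ⊆ T ∧ T ⊆ Q t ∧
      (t = 1 → #T = k 1) ∧ (1 < t → k (t - 1) + #T = k t) := by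
    intro t ht htm
    rcases Nat.lt_or_eq_of_le ht with ht | rfl
    · have := hstep t ht htm
      obtain ⟨T, hRT, hTQ, hcard⟩ :=
        exists_subsuperset_card_eq (hRQ t (by omega) htm).1 (n := k t - k (t - 1))
          (by omega) (by omega)
      exact ⟨T, hRT, hTQ, by omega, fun _ => by omega⟩
    · obtain ⟨T, hRT, hTQ, hcard⟩ := exists_subsuperset_card_eq (hRQ 1 le_rfl htm).1 h1.1 h1.2
      exact ⟨T, hRT, hTQ, fun _ => hcard, by omega⟩
  choose! T hT using hex
  have hTP : ∀ t, 1 ≤ t → t ≤ m → T t ⊆ P t := fun t ht htm =>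
    (hT t ht htm).2.1.trans (hRQ t ht htm).2
  refine ⟨(Icc 1 m).biUnion T, biUnion_mono fun t ht => hTP t (mem_Icc.mp ht).1 (mem_Icc.mp ht).2,
    fun t ht htm => ⟨(hT t ht htm).1.trans (subset_biUnion_of_mem T (mem_Icc.mpr ⟨ht, htm⟩)), ?_⟩,
    fun j hj hjm => ?_⟩
  · rw [biUnion_Icc_inter_eq hdisj hTP ht htm]
    exact (hT t ht htm).2.1
  · induction j, hj using Nat.le_induction with
    | base =>
      rw [cumUnion_one, biUnion_Icc_inter_eq hdisj hTP le_rfl hjm]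
      exact (hT 1 le_rfl hjm).2.2.1 rfl
    | succ j hj ih =>
      rw [card_inter_cumUnion_add_one hdisj hjm, ih (by omega),
        biUnion_Icc_inter_eq hdisj hTP (by omega) hjm]
      simpa using (hT (j + 1) (by omega) hjm).2.2.2 (by omega)

lemma not_conjEquiv_of_card_inter_le {S : Finset α} {u v : α} {i : ℕ} (hi : 1 ≤ i)
    (him : i ≤ m) (hS : conjWin m P k S) (hSi : #(S ∩ cumUnion P i) ≤ k i) (hu : u ∈ S)
    (hv : v ∉ S) (huC : u ∈ cumUnion P i) (hvC : v ∉ cumUnion P i) :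
    ¬ conjEquiv m P k u v := by
  intro h
  have hwin := (h (S.erase u) (notMem_erase u S) fun hv' => hv (mem_of_mem_erase hv')).mp
    (by rwa [insert_erase hu]) i hi him
  rw [insert_inter_of_notMem hvC, erase_inter] at hwin
  have := card_erase_lt_of_mem (mem_inter.mpr ⟨hu, huC⟩)
  omega

lemma not_conjEquiv_of_lt (hdisj : ∀ i j, 1 ≤ i → i < j → j ≤ m → Disjoint (P i) (P j))
    (hk1 : 0 < k 1) (hmono : ∀ t, 1 < t → t ≤ m → k (t - 1) ≤ k t)
    (hstrict : ∀ t, 1 < t → t < m → k (t - 1) < k t) (ha : k 1 ≤ #(P 1))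
    (hb : ∀ i, 1 < i → i ≤ m → k i < k (i - 1) + #(P i))
    {u v : α} {i j : ℕ} (hi : 1 ≤ i) (hij : i < j) (hjm : j ≤ m) (hu : u ∈ P i) (hv : v ∈ P j) :
    ¬ conjEquiv m P k u v := by
  have hvP : #((P j).erase v) + 1 = #(P j) := card_erase_add_one hv
  obtain ⟨S, -, hRQ, hcard⟩ := exists_tight_coalition (k := k) hdisj
    (fun t => if t = i then {u} else ∅) (fun t => if t = j then (P j).erase v else P t)
    (fun t _ _ => by split_ifs <;> subst_vars <;> first | omega | simp [hu, erase_subset])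
    (by simp only [if_neg (show 1 ≠ j by omega)]; split_ifs <;> simp <;> omega)
    (fun t ht htm => by
      have := hb t ht htm
      have := hmono t ht htm
      constructor <;> split_ifs with h <;> (try subst h) <;>
        (try simp only [card_singleton, card_empty]) <;>
        first | omega | (have := hstrict _ ht (by omega); omega))
  have hvS : v ∉ S := fun hvS => by
    simpa [if_pos rfl] using (hRQ j (by omega) hjm).2 (mem_inter.mpr ⟨hvS, hv⟩)
  exact not_conjEquiv_of_card_inter_le hi (by omega)
    (fun t ht htm => (hcard t ht htm).ge) (hcard i hi (by omega)).le
    ((hRQ i hi (by omega)).1 (by simp)) hvS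
    ((mem_cumUnion_iff_le hdisj hi (by omega) (by omega) hu).mpr le_rfl)
    (by rw [mem_cumUnion_iff_le hdisj (by omega) hjm (by omega) hv]; omega)

lemma conjWin_erase_of_eq (hdisj : ∀ i j, 1 ≤ i → i < j → j ≤ m → Disjoint (P i) (P j))
    (hm : 2 ≤ m) (hk : k (m - 1) = k m) {p : α} (hp : p ∈ P m) {X : Finset α}
    (hX : conjWin m P k X) : conjWin m P k (X.erase p) := by
  have hlow : ∀ t, t < m → X.erase p ∩ cumUnion P t = X ∩ cumUnion P t := fun t ht => by
    rw [erase_inter, erase_eq_of_notMem]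
    intro hpC
    have := (mem_cumUnion_iff_le hdisj (by omega) le_rfl ht.le hp).mp (mem_inter.mp hpC).2
    omega
  intro t ht htm
  rcases Nat.lt_or_eq_of_le htm with htm | rfl
  · rw [hlow t htm]
    exact hX t ht htm.le
  · calc k t = k (t - 1) := hk.symm
      _ ≤ #(X ∩ cumUnion P (t - 1)) := hX (t - 1) (by omega) (by omega)
      _ = #(X.erase p ∩ cumUnion P (t - 1)) := by rw [hlow _ (by omega)]
      _ ≤ #(X.erase p ∩ cumUnion P t) :=
        card_le_card (inter_subset_inter_left (cumUnion_mono (by omega)))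

lemma isDummy_of_eq (hdisj : ∀ i j, 1 ≤ i → i < j → j ≤ m → Disjoint (P i) (P j))
    (hm : 2 ≤ m) (hk : k (m - 1) = k m) {p : α} (hp : p ∈ P m) : isDummy m P k p :=
  fun _ hX hpX => hX.2 _ (erase_ssubset hpX) (conjWin_erase_of_eq hdisj hm hk hp hX.1)

lemma minWinning_of_card_le (hm : 1 ≤ m) {S : Finset α} (hS : conjWin m P k S)
    (hcard : #S ≤ k m) : minWinning m P k S := by
  refine ⟨hS, fun Y hY hYwin => ?_⟩
  have := hYwin m hm le_rfl
  have := card_le_card (inter_subset_left (s₁ := Y) (s₂ := cumUnion P m))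
  have := card_lt_card hY
  omega

lemma not_isDummy_of_lt (hdisj : ∀ i j, 1 ≤ i → i < j → j ≤ m → Disjoint (P i) (P j))
    (hm : 2 ≤ m) (hmono : ∀ t, 1 < t → t ≤ m → k (t - 1) ≤ k t) (ha : k 1 ≤ #(P 1))
    (hb : ∀ i, 1 < i → i ≤ m → k i < k (i - 1) + #(P i)) (hk : k (m - 1) < k m)
    {p : α} (hp : p ∈ P m) : ¬ isDummy m P k p := by
  obtain ⟨S, hSC, hRQ, hcard⟩ := exists_tight_coalition (k := k) hdisj
    (fun t => if t = m then {p} else ∅) P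
    (fun t _ _ => ⟨by split_ifs with h <;> (try subst h) <;> simp [hp], subset_rfl⟩)
    (by simp only [if_neg (show 1 ≠ m by omega), card_empty]; omega)
    (fun t ht htm => by
      have := hb t ht htm
      have := hmono t ht htm
      split_ifs with h <;> (try subst h) <;> simp only [card_singleton, card_empty] <;> omega)
  have hSm : #S = k m := by
    rw [← inter_eq_left.mpr hSC]
    exact hcard m (by omega) le_rfl
  exact fun hdum => hdum S (minWinning_of_card_le (by omega)
    (fun t ht htm => (hcard t ht htm).ge) hSm.le) ((hRQ m (by omega) le_rfl).1 (by simp))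

lemma conjEquiv.symm {u v : α} (h : conjEquiv m P k u v) : conjEquiv m P k v u :=
  fun X hv hu => (h X hu hv).symm

lemma le_card_and_lt_of_conjEquiv_iff
    (hdisj : ∀ i j, 1 ≤ i → i < j → j ≤ m → Disjoint (P i) (P j)) (hm : 2 ≤ m)
    (hne : ∀ i, 1 ≤ i → i ≤ m → (P i).Nonempty)
    (hclass : ∀ u v : α, conjEquiv m P k u v ↔ ∃ l, 1 ≤ l ∧ l ≤ m ∧ u ∈ P l ∧ v ∈ P l) :
    k 1 ≤ #(P 1) ∧ ∀ i, 1 < i → i ≤ m → k i < k (i - 1) + #(P i) := by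
  have hdiff : ∀ {u v : α} {i j : ℕ}, 1 ≤ i → i ≤ m → 1 ≤ j → j ≤ m → i ≠ j → u ∈ P i →
      v ∈ P j → ¬ conjEquiv m P k u v := fun hi him hj hjm hij hu hv huv =>
    not_exists_mem_and_mem hdisj hi him hj hjm hij hu hv ((hclass _ _).mp huv)
  refine ⟨?_, fun i hi him => ?_⟩ <;> by_contra! h
  · obtain ⟨u, hu⟩ := hne 1 le_rfl (by omega)
    obtain ⟨v, hv⟩ := hne 2 (by omega) hm
    exact hdiff le_rfl (by omega) (by omega) hm (by omega) hu hv fun X _ _ =>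
      iff_of_false (not_conjWin_of_card_lt (by omega) h _) (not_conjWin_of_card_lt (by omega) h _)
  · obtain ⟨j, rfl⟩ : ∃ j, i = j + 1 := ⟨i - 1, by omega⟩
    rw [Nat.add_sub_cancel] at h
    obtain ⟨u, hu⟩ := hne j (by omega) (by omega)
    obtain ⟨v, hv⟩ := hne (j + 1) hi.le him
    exact hdiff (by omega) (by omega) hi.le him (by omega) hu hv
      (conjEquiv_of_add_le hdisj (by omega) him h hu hv)

lemma conjEquiv_iff_of_le_card_of_lt
    (hdisj : ∀ i j, 1 ≤ i → i < j → j ≤ m → Disjoint (P i) (P j))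
    (hcover : ∀ a : α, ∃ i, 1 ≤ i ∧ i ≤ m ∧ a ∈ P i)
    (hk1 : 0 < k 1) (hmono : ∀ t, 1 < t → t ≤ m → k (t - 1) ≤ k t)
    (hstrict : ∀ t, 1 < t → t < m → k (t - 1) < k t) (ha : k 1 ≤ #(P 1))
    (hb : ∀ i, 1 < i → i ≤ m → k i < k (i - 1) + #(P i)) (u v : α) :
    conjEquiv m P k u v ↔ ∃ l, 1 ≤ l ∧ l ≤ m ∧ u ∈ P l ∧ v ∈ P l := by
  refine ⟨fun huv => ?_, fun ⟨l, hl, hlm, hu, hv⟩ => conjEquiv_of_mem_of_mem hdisj hl hlm hu hv⟩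
  obtain ⟨i, hi, him, hu⟩ := hcover u
  obtain ⟨j, hj, hjm, hv⟩ := hcover v
  rcases lt_trichotomy i j with hij | rfl | hij
  · exact absurd huv (not_conjEquiv_of_lt hdisj hk1 hmono hstrict ha hb hi hij hjm hu hv)
  · exact ⟨i, hi, him, hu, hv⟩
  · exact absurd huv.symm (not_conjEquiv_of_lt hdisj hk1 hmono hstrict ha hb hj hij him hv hu)

end Game

theorem stmt_11_general {α : Type*} [DecidableEq α]
    (m : ℕ) (hm : 2 ≤ m) (P : ℕ → Finset α) (k : ℕ → ℕ)
    (hdisj : ∀ i j, 1 ≤ i → i < j → j ≤ m → Disjoint (P i) (P j))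
    (hlvlne : ∀ i, 1 ≤ i → i ≤ m → (P i).Nonempty)
    (hcover : ∀ a : α, ∃ i, 1 ≤ i ∧ i ≤ m ∧ a ∈ P i)
    (hkpos : ∀ i, 1 ≤ i → i ≤ m → 0 < k i)
    (hkmono : ∀ i, 1 ≤ i → i + 1 < m → k i < k (i + 1))
    (hklast : k (m - 1) ≤ k m) :
    ((∀ u v : α,
        (∀ X : Finset α, u ∉ X → v ∉ X →
            (conjWin m P k (insert u X) ↔ conjWin m P k (insert v X))) ↔
          ∃ i, 1 ≤ i ∧ i ≤ m ∧ u ∈ P i ∧ v ∈ P i) ↔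
      (k 1 ≤ (P 1).card ∧
        ∀ i, 1 < i → i ≤ m → k i < k (i - 1) + (P i).card)) ∧
    ((k 1 ≤ (P 1).card ∧
        ∀ i, 1 < i → i ≤ m → k i < k (i - 1) + (P i).card) →
      ((∀ p ∈ P m, isDummy m P k p) ↔ k (m - 1) = k m)) := by
  have hstrict : ∀ t, 1 < t → t < m → k (t - 1) < k t := fun t ht htm =>
    (hkmono (t - 1) (by omega) (by omega)).trans_eq (by congr 1; omega)
  have hmono : ∀ t, 1 < t → t ≤ m → k (t - 1) ≤ k t := fun t ht htm => by
    rcases Nat.lt_or_eq_of_le htm with htm | rfl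
    exacts [(hstrict t ht htm).le, hklast]
  refine ⟨⟨le_card_and_lt_of_conjEquiv_iff hdisj hm hlvlne, fun ⟨ha, hb⟩ =>
    conjEquiv_iff_of_le_card_of_lt hdisj hcover (hkpos 1 le_rfl (by omega)) hmono hstrict ha hb⟩,
    fun ⟨ha, hb⟩ => ⟨fun hdum => ?_, fun hk p hp => isDummy_of_eq hdisj hm hk hp⟩⟩
  by_contra hne
  obtain ⟨p, hp⟩ := hlvlne m (by omega) le_rfl
  exact not_isDummy_of_lt hdisj hm hmono ha hb (lt_of_le_of_ne hklast hne) hp (hdum p hp)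

/-- for the conjunctive hierarchical game `H` on
`P = P_1 ∪ ... ∪ P_m` with thresholds `k_1 < ... < k_{m-1} ≤ k_m`, the
equivalence classes of `~_H` are exactly `P_1, ..., P_m` iff (a) `k_1 ≤ n_1`
and (b) `k_i < k_{i-1} + n_i` for every `1 < i ≤ m`. Moreover, under (a) and
(b), every player of the last level `P_m` is a dummy iff `k_{m-1} = k_m`. -/
theorem stmt_11 {α : Type*} [Fintype α] [DecidableEq α]
    (m : ℕ) (hm : 2 ≤ m) (P : ℕ → Finset α) (k : ℕ → ℕ)
    (hdisj : ∀ i j, 1 ≤ i → i < j → j ≤ m → Disjoint (P i) (P j))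
    (hlvlne : ∀ i, 1 ≤ i → i ≤ m → (P i).Nonempty)
    (hcover : ∀ a : α, ∃ i, 1 ≤ i ∧ i ≤ m ∧ a ∈ P i)
    (hkpos : ∀ i, 1 ≤ i → i ≤ m → 0 < k i)
    (hkmono : ∀ i, 1 ≤ i → i + 1 < m → k i < k (i + 1))
    (hklast : k (m - 1) ≤ k m) :
    ((∀ u v : α,
        (∀ X : Finset α, u ∉ X → v ∉ X →
            (conjWin m P k (insert u X) ↔ conjWin m P k (insert v X))) ↔
          ∃ i, 1 ≤ i ∧ i ≤ m ∧ u ∈ P i ∧ v ∈ P i) ↔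
      (k 1 ≤ (P 1).card ∧
        ∀ i, 1 < i → i ≤ m → k i < k (i - 1) + (P i).card)) ∧
    ((k 1 ≤ (P 1).card ∧
        ∀ i, 1 < i → i ≤ m → k i < k (i - 1) + (P i).card) →
      ((∀ p ∈ P m, isDummy m P k p) ↔ k (m - 1) = k m)) :=
  stmt_11_general m hm P k hdisj hlvlne hcover hkpos hkmono hklast
end

section
/- Duality exchanges unique shift-maximal losing coalitions and unique shift-minimal winning coalitions: let G=(P,W) be a complete simple game with a unique shift-maximal losing coalition S. Then the complement P∖S is the unique shift-minimal winning coalition of the dual game G*. -/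
/-!
Complementation maps the winning coalitions of `G*` onto the losing coalitions of `G`,
reverses inclusion, and leaves the desirability relation unchanged. Since
`(X ∖ {p}) ∪ {q}` has complement `(Xᶜ ∖ {q}) ∪ {p}`, a shift of `X` becomes an inverse
shift of `Xᶜ`. So `X` is shift-minimal winning in `G*` exactly when `Xᶜ` is shift-maximal
losing in `G`, and the theorem follows from uniqueness.
-/

/-- Isbel's desirability relation `i ≽_G j` for the game with winning
coalitions `W` (the player set is the whole finite type): for every coalition
`X` avoiding `i` and `j`, `X ∪ {j} ∈ W` implies `X ∪ {i} ∈ W`. -/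
def isbelGE {α : Type*} [DecidableEq α] (W : Set (Finset α)) (i j : α) : Prop :=
  ∀ X : Finset α, i ∉ X → j ∉ X → (insert j X ∈ W → insert i X ∈ W)

/-- `q ≺_G p`: `p ≽_G q` but not `q ≽_G p`. -/
def strictPrec {α : Type*} [DecidableEq α] (W : Set (Finset α)) (q p : α) : Prop :=
  isbelGE W p q ∧ ¬ isbelGE W q p

/-- A shift-minimal winning coalition: winning, every coalition properly
contained in it is losing, and every coalition obtained from it by a shift
(replacing `p ∈ X` by `q ∉ X` with `q ≺ p`) is losing. -/
def shiftMinWinning {α : Type*} [DecidableEq α] (W : Set (Finset α))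
    (X : Finset α) : Prop :=
  X ∈ W ∧ (∀ Y : Finset α, Y ⊂ X → Y ∉ W) ∧
    ∀ p q : α, p ∈ X → q ∉ X → strictPrec W q p → insert q (X.erase p) ∉ W

/-- A shift-maximal losing coalition: losing, every coalition properly
containing it is winning, and it is not obtained from any losing coalition by
a shift. -/
def shiftMaxLosing {α : Type*} [DecidableEq α] (W : Set (Finset α))
    (Y : Finset α) : Prop :=
  Y ∉ W ∧ (∀ Z : Finset α, Y ⊂ Z → Z ∈ W) ∧
    ¬ ∃ (Z : Finset α) (p q : α), Z ∉ W ∧ p ∈ Z ∧ q ∉ Z ∧ strictPrec W q p ∧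
        Y = insert q (Z.erase p)

/-- The dual game `G*`: a coalition is winning iff its complement is losing. -/
def dualW {α : Type*} [Fintype α] [DecidableEq α] (W : Set (Finset α)) :
    Set (Finset α) := {X | Xᶜ ∉ W}

theorem eq_insert_erase_iff {α : Type*} [DecidableEq α] {Y Z : Finset α} {p q : α} :
    (p ∈ Z ∧ q ∉ Z ∧ Y = insert q (Z.erase p)) ↔
      (q ∈ Y ∧ p ∉ Y ∧ Z = insert p (Y.erase q)) := by
  constructor
  · rintro ⟨hp, hq, rfl⟩
    refine ⟨by simp, by grind, ?_⟩
    rw [Finset.erase_insert (by simp [hq]), Finset.insert_erase hp]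
  · rintro ⟨hq, hp, rfl⟩
    refine ⟨by simp, by grind, ?_⟩
    rw [Finset.erase_insert (by simp [hp]), Finset.insert_erase hq]

section Duality

variable {α : Type*} [Fintype α] [DecidableEq α]

theorem dualW_dualW (W : Set (Finset α)) : dualW (dualW W) = W := by
  ext X
  simp [dualW]

theorem isbelGE.dual {W : Set (Finset α)} {i j : α} (h : isbelGE W i j) :
    isbelGE (dualW W) i j := by
  intro X hiX hjX (hjXW : (insert j X)ᶜ ∉ W) (hiXW : (insert i X)ᶜ ∈ W)
  obtain rfl | hij := eq_or_ne i j
  · exact hjXW hiXW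
  set Y := (insert i X)ᶜ.erase j
  have hiY : i ∉ Y := by simp [Y]
  have hjY : j ∉ Y := by simp [Y]
  have hj : (insert j X)ᶜ = insert i Y := by
    ext x
    simp only [Y, Finset.mem_compl, Finset.mem_insert, Finset.mem_erase]
    grind
  have hi : (insert i X)ᶜ = insert j Y := by
    ext x
    simp only [Y, Finset.mem_compl, Finset.mem_insert, Finset.mem_erase]
    grind
  rw [hj] at hjXW
  rw [hi] at hiXW
  exact hjXW (h Y hiY hjY hiXW)

theorem isbelGE_dualW_iff {W : Set (Finset α)} {i j : α} :
    isbelGE (dualW W) i j ↔ isbelGE W i j :=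
  ⟨fun h => dualW_dualW W ▸ h.dual, isbelGE.dual⟩

theorem strictPrec_dualW_iff {W : Set (Finset α)} {q p : α} :
    strictPrec (dualW W) q p ↔ strictPrec W q p := by
  simp only [strictPrec, isbelGE_dualW_iff]

theorem compl_insert_erase {X : Finset α} {p q : α} (hp : p ∈ X) (hq : q ∉ X) :
    (insert q (X.erase p))ᶜ = insert p (Xᶜ.erase q) := by
  ext x
  simp only [Finset.mem_compl, Finset.mem_insert, Finset.mem_erase]
  grind

theorem shiftMinWinning_dualW_iff {W : Set (Finset α)} {X : Finset α} :
    shiftMinWinning (dualW W) X ↔ shiftMaxLosing W Xᶜ := by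
  have hsub : (∀ Y, Y ⊂ X → Y ∉ dualW W) ↔ ∀ Z, Xᶜ ⊂ Z → Z ∈ W := by
    refine ⟨fun h Z hZ => ?_, fun h Y hY => ?_⟩
    · simpa [dualW] using h Zᶜ (by rwa [← compl_compl X, Finset.compl_ssubset_compl])
    · simpa [dualW] using h Yᶜ (Finset.compl_ssubset_compl.mpr hY)
  have hshift : (∀ p q, p ∈ X → q ∉ X → strictPrec (dualW W) q p →
        insert q (X.erase p) ∉ dualW W) ↔
      ¬ ∃ (Z : Finset α) (p q : α), Z ∉ W ∧ p ∈ Z ∧ q ∉ Z ∧ strictPrec W q p ∧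
        Xᶜ = insert q (Z.erase p) := by
    simp only [strictPrec_dualW_iff]
    simp only [dualW, Set.mem_ofPred_eq, not_not]
    constructor
    · rintro h ⟨Z, p, q, hZ, hpZ, hqZ, hqp, hX⟩
      obtain ⟨hqX, hpX, rfl⟩ := eq_insert_erase_iff.mp ⟨hpZ, hqZ, hX⟩
      rw [Finset.mem_compl, not_not] at hpX
      rw [Finset.mem_compl] at hqX
      exact hZ (compl_insert_erase hpX hqX ▸ h p q hpX hqX hqp)
    · intro h p q hpX hqX hqp
      by_contra hW
      rw [compl_insert_erase hpX hqX] at hW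
      obtain ⟨hpZ, hqZ, hX⟩ := eq_insert_erase_iff.mpr
        ⟨Finset.mem_compl.mpr hqX, by simpa using hpX, rfl⟩
      exact h ⟨_, p, q, hW, hpZ, hqZ, hqp, hX⟩
  rw [shiftMinWinning, shiftMaxLosing, hsub, hshift]
  rfl

end Duality

theorem stmt_18_general {α : Type*} [Fintype α] [DecidableEq α] (W : Set (Finset α))
    (S : Finset α)
    (hS : shiftMaxLosing W S)
    (huniq : ∀ Y : Finset α, shiftMaxLosing W Y → Y = S) :
    shiftMinWinning (dualW W) Sᶜ ∧
      ∀ X : Finset α, shiftMinWinning (dualW W) X → X = Sᶜ := by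
  refine ⟨shiftMinWinning_dualW_iff.mpr (by rwa [compl_compl]), fun X hX => ?_⟩
  rw [← huniq Xᶜ (shiftMinWinning_dualW_iff.mp hX), compl_compl]

/-- duality exchanges unique shift-maximal losing coalitions and
unique shift-minimal winning coalitions: if `G = (P, W)` is a complete simple
game with a unique shift-maximal losing coalition `S`, then `P ∖ S` is the
unique shift-minimal winning coalition of the dual game `G*`. -/
theorem stmt_18 {α : Type*} [Fintype α] [DecidableEq α] (W : Set (Finset α))
    (hne : W.Nonempty)
    (hmono : ∀ X Y : Finset α, X ∈ W → X ⊆ Y → Y ∈ W)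
    (hcomp : ∀ i j : α, isbelGE W i j ∨ isbelGE W j i)
    (S : Finset α)
    (hS : shiftMaxLosing W S)
    (huniq : ∀ Y : Finset α, shiftMaxLosing W Y → Y = S) :
    shiftMinWinning (dualW W) Sᶜ ∧
      ∀ X : Finset α, shiftMinWinning (dualW W) X → X = Sᶜ :=
  stmt_18_general W S hS huniq
end
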